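/- Let R > 0 and c ∈ ℝ² with d := ‖c‖ > 0, and let X be a random point of ℝ² uniformly distributed on the closed disc of radius R centered at c. Then for every r with |R − d| < r < R + d, the function G(r) = P(‖X‖ ≤ r) is differentiable at r with derivative G′(r) = (2r/(πR²)) · arccos((r² + d² − R²)/(2 r d)). -/

import Mathlib

/-!
In polar coordinates `z = ρ e^{iθ}`, after rotating the centre of the disc to the positive real
axis, the law of cosines turns `‖z - d‖ ≤ R` into `cos θ ≥ (ρ² + d² - R²) / (2ρd)`, so the circle
of radius `ρ` meets the disc in an arc of angle `2 arccos ((ρ² + d² - R²) / (2ρd))`; because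
`arccos` saturates at `π` and `0`, this also covers circles lying entirely inside or outside the
disc. Hence `πR² G(s) = ∫₀ˢ 2ρ arccos (…) dρ` for every `s ≥ 0`, with a continuous integrand,
and the fundamental theorem of calculus gives the derivative.
-/

open MeasureTheory ProbabilityTheory Real

noncomputable section

abbrev Plane : Type := EuclideanSpace ℝ (Fin 2)

open Set Metric Filter Topology

namespace Real

theorem le_arccos_of_le_cos {k t : ℝ} (ht₀ : 0 ≤ t) (ht : t ≤ π) (h : k ≤ cos t) :
    t ≤ arccos k :=
  arccos_cos ht₀ ht ▸ arccos_le_arccos h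

theorem le_cos_arccos {k : ℝ} (hk : k ≤ 1) : k ≤ cos (arccos k) := by
  rcases le_or_gt (-1) k with h | h
  · rw [cos_arccos h hk]
  · rw [arccos_of_le_neg_one h.le, cos_pi]
    exact h.le

theorem le_cos_of_le_arccos {k t : ℝ} (hk : k ≤ 1) (ht₀ : 0 ≤ t) (h : t ≤ arccos k) :
    k ≤ cos t :=
  (le_cos_arccos hk).trans (cos_le_cos_of_nonneg_of_le_pi ht₀ (arccos_le_pi k) h)

theorem volume_setOf_le_cos (k : ℝ) :
    volume {θ ∈ Ioo (-π) π | k ≤ cos θ} = ENNReal.ofReal (2 * arccos k) := by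
  have hsub : {θ ∈ Ioo (-π) π | k ≤ cos θ} ⊆ Icc (-arccos k) (arccos k) := by
    rintro θ ⟨hθ, hk⟩
    rw [← cos_abs] at hk
    exact abs_le.1 (le_arccos_of_le_cos (abs_nonneg θ) (abs_le.2 ⟨hθ.1.le, hθ.2.le⟩) hk)
  have hsup : Ioo (-arccos k) (arccos k) ⊆ {θ ∈ Ioo (-π) π | k ≤ cos θ} := by
    intro θ hθ
    have hθ' : |θ| < arccos k := abs_lt.2 hθ
    have hk : k < 1 := arccos_pos.1 ((abs_nonneg θ).trans_lt hθ')
    refine ⟨abs_lt.1 (hθ'.trans_le (arccos_le_pi k)), ?_⟩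
    rw [← cos_abs]
    exact le_cos_of_le_arccos hk.le (abs_nonneg θ) hθ'.le
  refine le_antisymm ((measure_mono hsub).trans_eq ?_) (le_of_eq_of_le ?_ (measure_mono hsup))
  · rw [volume_Icc]; ring_nf
  · rw [volume_Ioo]; ring_nf

end Real

/-- Length of the arc of the circle `‖z‖ = ρ` inside a closed disc of radius `R` whose centre is at
distance `d` from `0`; the paper's density is `χ⁽²⁾(ρ, d) = lensArcLength R d ρ / (π R²)`. -/
def lensArcLength (R d ρ : ℝ) : ℝ := 2 * ρ * arccos ((ρ ^ 2 + d ^ 2 - R ^ 2) / (2 * ρ * d))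

theorem lensArcLength_nonneg (R d : ℝ) {ρ : ℝ} (hρ : 0 ≤ ρ) : 0 ≤ lensArcLength R d ρ := by
  unfold lensArcLength
  have := arccos_nonneg ((ρ ^ 2 + d ^ 2 - R ^ 2) / (2 * ρ * d))
  positivity

theorem abs_lensArcLength_le (R d ρ : ℝ) : |lensArcLength R d ρ| ≤ 2 * π * |ρ| := by
  unfold lensArcLength
  rw [abs_mul, abs_mul, abs_two, abs_of_nonneg (arccos_nonneg _), mul_right_comm]
  gcongr
  exact arccos_le_pi _

theorem continuous_lensArcLength (R : ℝ) {d : ℝ} (hd : d ≠ 0) :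
    Continuous (lensArcLength R d) := by
  refine continuous_iff_continuousAt.2 fun ρ => ?_
  rcases eq_or_ne ρ 0 with rfl | hρ
  · have h0 : lensArcLength R d 0 = 0 := by simp [lensArcLength]
    rw [ContinuousAt, h0]
    refine squeeze_zero_norm (fun ρ => abs_lensArcLength_le R d ρ) ?_
    simpa using (continuous_abs.tendsto 0).const_mul (2 * π)
  · unfold lensArcLength
    fun_prop (disch := positivity)

namespace Complex

theorem volume_eq_lintegral_polarCoord {S : Set ℂ} (hS : MeasurableSet S) :
    volume S = ∫⁻ ρ in Ioi 0,
      ENNReal.ofReal ρ * volume {θ ∈ Ioo (-π) π | Complex.polarCoord.symm (ρ, θ) ∈ S} := by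
  have hmeas : Measurable Complex.polarCoord.symm :=
    measurableEquivRealProd.symm.measurable.comp continuous_polarCoord_symm.measurable
  rw [← lintegral_indicator_one hS, ← Complex.lintegral_comp_polarCoord_symm,
    polarCoord_target, Measure.volume_eq_prod, setLIntegral_prod]
  · refine setLIntegral_congr_fun measurableSet_Ioi fun ρ _ => ?_
    have hpre : MeasurableSet ((fun θ => Complex.polarCoord.symm (ρ, θ)) ⁻¹' S) :=
      hS.preimage (hmeas.comp measurable_prodMk_left)
    change ∫⁻ θ in Ioo (-π) π, ENNReal.ofReal ρ *
      ((fun θ => Complex.polarCoord.symm (ρ, θ)) ⁻¹' S).indicator 1 θ = _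
    rw [lintegral_const_mul' _ _ ENNReal.ofReal_ne_top, lintegral_indicator_one hpre,
      Measure.restrict_apply hpre, inter_comm]
    rfl
  · exact ((ENNReal.measurable_ofReal.comp measurable_fst).smul
      ((measurable_one.indicator hS).comp hmeas)).aemeasurable

theorem norm_polarCoord_symm_sub_ofReal_sq (ρ θ d : ℝ) :
    ‖Complex.polarCoord.symm (ρ, θ) - d‖ ^ 2 = ρ ^ 2 + d ^ 2 - 2 * ρ * d * Real.cos θ := by
  simp only [Complex.sq_norm, normSq_apply, Complex.polarCoord_symm_apply, sub_re, sub_im, mul_re,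
    mul_im, add_re, add_im, ofReal_re, ofReal_im, I_re, I_im]
  linear_combination ρ ^ 2 * Real.sin_sq_add_cos_sq θ

theorem polarCoord_symm_mem_closedBall_iff {ρ d R : ℝ} (hρ : 0 < ρ) (hd : 0 < d) (hR : 0 ≤ R)
    (θ : ℝ) : Complex.polarCoord.symm (ρ, θ) ∈ closedBall (d : ℂ) R ↔
      (ρ ^ 2 + d ^ 2 - R ^ 2) / (2 * ρ * d) ≤ Real.cos θ := by
  rw [mem_closedBall, dist_eq_norm, ← sq_le_sq₀ (norm_nonneg _) hR,
    norm_polarCoord_symm_sub_ofReal_sq, div_le_iff₀ (by positivity)]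
  constructor <;> intro h <;> linarith

theorem volume_closedBall_inter_closedBall {d R s : ℝ} (hd : 0 < d) (hR : 0 ≤ R)
    (hs : 0 ≤ s) : volume (closedBall (0 : ℂ) s ∩ closedBall (d : ℂ) R) =
      ENNReal.ofReal (∫ ρ in 0..s, lensArcLength R d ρ) := by
  have hangle : ∀ ρ ∈ Ioi (0 : ℝ), ENNReal.ofReal ρ * volume {θ ∈ Ioo (-π) π |
      Complex.polarCoord.symm (ρ, θ) ∈ closedBall 0 s ∩ closedBall (d : ℂ) R} =
      (Iic s).indicator (fun ρ => ENNReal.ofReal (lensArcLength R d ρ)) ρ := by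
    intro ρ (hρ : 0 < ρ)
    simp_rw [mem_inter_iff, mem_closedBall_zero_iff, Complex.norm_polarCoord_symm, abs_of_pos hρ]
    by_cases hρs : ρ ≤ s
    · simp_rw [indicator_of_mem (show ρ ∈ Iic s from hρs), hρs, true_and,
        polarCoord_symm_mem_closedBall_iff hρ hd hR, Real.volume_setOf_le_cos,
        lensArcLength, ← ENNReal.ofReal_mul hρ.le]
      ring_nf
    · simp_rw [indicator_of_notMem (show ρ ∉ Iic s from hρs), hρs, false_and, and_false,
        ofPred_false, measure_empty, mul_zero]
  have hcont := continuous_lensArcLength R hd.ne'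
  rw [volume_eq_lintegral_polarCoord (measurableSet_closedBall.inter measurableSet_closedBall),
    setLIntegral_congr_fun measurableSet_Ioi hangle, lintegral_indicator measurableSet_Iic,
    Measure.restrict_restrict measurableSet_Iic, Iic_inter_Ioi,
    intervalIntegral.integral_of_le hs, ofReal_integral_eq_lintegral_ofReal hcont.integrableOn_Ioc]
  exact (ae_restrict_iff' measurableSet_Ioc).2
    (Eventually.of_forall fun ρ hρ => lensArcLength_nonneg R d hρ.1.le)

end Complex

theorem exists_linearIsometryEquiv_complex_apply_eq_norm (c : Plane) :
    ∃ e : Plane ≃ₗᵢ[ℝ] ℂ, e c = ‖c‖ := by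
  set w := Complex.orthonormalBasisOneI.repr.symm c
  refine ⟨Complex.orthonormalBasisOneI.repr.symm.trans (rotation (Circle.exp (-w.arg))), ?_⟩
  have hw : ‖w‖ = ‖c‖ := LinearIsometryEquiv.norm_map _ c
  rw [LinearIsometryEquiv.trans_apply, rotation_apply, Circle.coe_exp, ← hw]
  calc Complex.exp (↑(-w.arg) * Complex.I) * w
      = Complex.exp (↑(-w.arg) * Complex.I) * (‖w‖ * Complex.exp (w.arg * Complex.I)) := by
        rw [Complex.norm_mul_exp_arg_mul_I]
    _ = ‖w‖ := by
        rw [mul_left_comm, ← Complex.exp_add, Complex.ofReal_neg, neg_mul, neg_add_cancel,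
          Complex.exp_zero, mul_one]

theorem volume_closedBall_inter_closedBall {c : Plane} (hc : 0 < ‖c‖) {R s : ℝ} (hR : 0 ≤ R)
    (hs : 0 ≤ s) : volume (closedBall (0 : Plane) s ∩ closedBall c R) =
      ENNReal.ofReal (∫ ρ in 0..s, lensArcLength R ‖c‖ ρ) := by
  obtain ⟨e, he⟩ := exists_linearIsometryEquiv_complex_apply_eq_norm c
  rw [← Complex.volume_closedBall_inter_closedBall hc hR hs, ← he, ← e.map_zero,
    ← e.measurePreserving.measure_preimage
      (measurableSet_closedBall.inter measurableSet_closedBall).nullMeasurableSet,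
    preimage_inter]
  simp

theorem hasDerivAt_volume_closedBall_inter_closedBall {c : Plane} (hc : 0 < ‖c‖) {R r : ℝ}
    (hR : 0 ≤ R) (hr : 0 < r) :
    HasDerivAt (fun s => (volume (closedBall (0 : Plane) s ∩ closedBall c R)).toReal)
      (lensArcLength R ‖c‖ r) r := by
  have hcont := continuous_lensArcLength R hc.ne'
  have hFTC :
      HasDerivAt (fun s => ∫ ρ in 0..s, lensArcLength R ‖c‖ ρ) (lensArcLength R ‖c‖ r) r :=
    intervalIntegral.integral_hasDerivAt_right (hcont.intervalIntegrable _ _)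
      (hcont.stronglyMeasurableAtFilter _ _) hcont.continuousAt
  refine hFTC.congr_of_eventuallyEq ?_
  filter_upwards [lt_mem_nhds hr] with s hs
  rw [volume_closedBall_inter_closedBall hc hR hs.le, ENNReal.toReal_ofReal]
  exact intervalIntegral.integral_nonneg hs.le fun ρ hρ => lensArcLength_nonneg R _ hρ.1

theorem uniform_disc_distance_density_lens_general
    {Ω : Type*} [MeasurableSpace Ω] (μ : Measure Ω)
    (R : ℝ) (hR : 0 < R) (c : Plane) (hd : 0 < ‖c‖)
    (X : Ω → Plane) (hX : Measurable X)
    (hlaw : Measure.map X μ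
      = (ENNReal.ofReal (π * R ^ 2))⁻¹ • volume.restrict (Metric.closedBall c R)) :
    ∀ r : ℝ, |R - ‖c‖| < r → r < R + ‖c‖ →
      HasDerivAt (fun s => (μ {ω | ‖X ω‖ ≤ s}).toReal)
        ((2 * r / (π * R ^ 2)) * Real.arccos ((r ^ 2 + ‖c‖ ^ 2 - R ^ 2) / (2 * r * ‖c‖))) r := by
  intro r hr _
  have hG : ∀ s, (μ {ω | ‖X ω‖ ≤ s}).toReal =
      (π * R ^ 2)⁻¹ * (volume (closedBall (0 : Plane) s ∩ closedBall c R)).toReal := by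
    intro s
    have hpre : {ω | ‖X ω‖ ≤ s} = X ⁻¹' closedBall 0 s := by
      ext ω; simp
    rw [hpre, ← Measure.map_apply hX measurableSet_closedBall, hlaw, Measure.smul_apply,
      Measure.restrict_apply measurableSet_closedBall, smul_eq_mul, ENNReal.toReal_mul,
      ENNReal.toReal_inv, ENNReal.toReal_ofReal (by positivity)]
  have hr0 : 0 < r := (abs_nonneg _).trans_lt hr
  simp only [hG]
  refine ((hasDerivAt_volume_closedBall_inter_closedBall hd hR.le hr0).const_mul _).congr_deriv
    ?_
  unfold lensArcLength
  ring

/-- If `X` is uniformly distributed on the closed disc of radius `R`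
centered at `c`, with `d = ‖c‖ > 0`, then for `|R − d| < r < R + d` the function
`G r = P(‖X‖ ≤ r)` is differentiable at `r` with derivative
`(2r/(πR²)) · arccos ((r² + d² − R²)/(2rd))`. -/
theorem uniform_disc_distance_density_lens
    {Ω : Type*} [MeasurableSpace Ω] (μ : Measure Ω) [IsProbabilityMeasure μ]
    (R : ℝ) (hR : 0 < R) (c : Plane) (hd : 0 < ‖c‖)
    (X : Ω → Plane) (hX : Measurable X)
    (hlaw : Measure.map X μ
      = (ENNReal.ofReal (π * R ^ 2))⁻¹ • volume.restrict (Metric.closedBall c R)) :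
    ∀ r : ℝ, |R - ‖c‖| < r → r < R + ‖c‖ →
      HasDerivAt (fun s => (μ {ω | ‖X ω‖ ≤ s}).toReal)
        ((2 * r / (π * R ^ 2)) * Real.arccos ((r ^ 2 + ‖c‖ ^ 2 - R ^ 2) / (2 * r * ‖c‖))) r :=
  uniform_disc_distance_density_lens_general μ R hR c hd X hX hlaw
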